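/- Approximate Eaton condition implies small angular Fourier oscillation: let z be an integrable random vector in R² with a density f such that for every nonzero ξ ∈ R² and every w with wᵀξ = 0, |E[wᵀz | ξᵀz]| ≤ ε‖w‖ almost surely. Then for any ξ, ξ' ∈ R² with ‖ξ‖ = ‖ξ'‖ = r > 0, the Fourier transform f̂ satisfies |f̂(ξ') − f̂(ξ)| ≤ 2π C' r ε for an absolute constant C' ≥ 1. -/

import Mathlib

open Matrix MeasureTheory Real

noncomputable def enorm (x : Fin 2 → ℝ) : ℝ := Real.sqrt (x ⬝ᵥ x)

/-- Characteristic function `f̂(ξ) = E[e^{−i2π⟨ξ,z⟩}]` of a law `ν` on `ℝ²`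
(the Fourier transform of its density). -/
noncomputable def charFun (ν : Measure (Fin 2 → ℝ)) (ξ : Fin 2 → ℝ) : ℂ :=
  ∫ x, Complex.exp (-(2 * π * Complex.I) * (ξ ⬝ᵥ x : ℝ)) ∂ν

/-! Parametrize the circle of radius `r` as `θ ↦ r (cos θ, sin θ)`. Along it the derivative of
`f̂` is `-2πi E[wᵀz e^{-2πi ξᵀz}]` with `w = r (-sin θ, cos θ) ⊥ ξ`. The phase is
`σ(ξᵀz)`-measurable, so `wᵀz` may be replaced by `E[wᵀz | ξᵀz]`, which is at most `ε r` in
absolute value. Hence `f̂` is `2π ε r`-Lipschitz in the angle, and any two points of the circle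
are at angular distance at most `π`: `C' = π`. -/

theorem norm_neg_two_pi_mul_I : ‖-(2 * π * Complex.I)‖ = 2 * π := by
  simp [abs_of_pos pi_pos]

theorem integral_smul_eq_integral_condExp_smul {Ω E : Type*} [NormedAddCommGroup E]
    [NormedSpace ℝ E] [CompleteSpace E] {m m₀ : MeasurableSpace Ω} {μ : Measure Ω}
    (hm : m ≤ m₀) [SigmaFinite (μ.trim hm)]
    {f : Ω → ℝ} {g : Ω → E} (hf : Integrable f μ) (hg : AEStronglyMeasurable[m] g μ)
    (hfg : Integrable (f • g) μ) :
    ∫ ω, f ω • g ω ∂μ = ∫ ω, μ[f | m] ω • g ω ∂μ :=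
  (integral_condExp hm).symm.trans
    (integral_congr_ae (condExp_smul_of_aestronglyMeasurable_right hf hfg hg))

theorem norm_integral_smul_cexp_le_of_abs_condExp_le {Ω : Type*} [MeasurableSpace Ω]
    {μ : Measure Ω} [IsProbabilityMeasure μ] {W Ξ : Ω → ℝ} {δ : ℝ}
    (hΞ : Measurable Ξ) (hW : Integrable W μ)
    (hδ : ∀ᵐ ω ∂μ, |μ[W | MeasurableSpace.comap Ξ (borel ℝ)] ω| ≤ δ) :
    ‖∫ ω, W ω • Complex.exp (-(2 * π * Complex.I) * Ξ ω) ∂μ‖ ≤ δ := by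
  have hm : MeasurableSpace.comap Ξ (borel ℝ) ≤ ‹MeasurableSpace Ω› := by
    rw [← BorelSpace.measurable_eq]; exact hΞ.comap_le
  have hphase : StronglyMeasurable[MeasurableSpace.comap Ξ (borel ℝ)]
      fun ω ↦ Complex.exp (-(2 * π * Complex.I) * Ξ ω) := by
    have hΞ' : Measurable[MeasurableSpace.comap Ξ (borel ℝ)] Ξ := by
      rw [← BorelSpace.measurable_eq]; exact comap_measurable Ξ
    exact (by fun_prop : Measurable fun t : ℝ ↦ Complex.exp (-(2 * π * Complex.I) * t)).comp hΞ'
      |>.stronglyMeasurable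
  have hnorm : ∀ t : ℝ, ‖Complex.exp (-(2 * π * Complex.I) * t)‖ = 1 := fun t ↦ by
    rw [Complex.norm_exp]; simp
  rw [integral_smul_eq_integral_condExp_smul hm hW hphase.aestronglyMeasurable
    (hW.smul_of_top_left (memLp_top_of_bound (hphase.mono hm).aestronglyMeasurable 1
      (.of_forall fun ω ↦ (hnorm _).le)))]
  calc _ ≤ δ * μ.real Set.univ := norm_integral_le_of_norm_le_const <| hδ.mono fun ω h ↦ by
        rwa [norm_smul, hnorm, mul_one, Real.norm_eq_abs]
    _ = δ := by simp

theorem integrable_dotProduct {ι : Type*} [Fintype ι] {ν : Measure (ι → ℝ)}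
    (hν : ∀ i, Integrable (fun x : ι → ℝ ↦ x i) ν) (v : ι → ℝ) :
    Integrable (fun x ↦ v ⬝ᵥ x) ν :=
  integrable_finsetSum _ fun i _ ↦ (hν i).const_mul (v i)

noncomputable def polarVec (r θ : ℝ) : Fin 2 → ℝ := ![r * cos θ, r * sin θ]

theorem polarVec_dotProduct (r θ : ℝ) (x : Fin 2 → ℝ) :
    polarVec r θ ⬝ᵥ x = r * cos θ * x 0 + r * sin θ * x 1 := by
  simp [polarVec, dotProduct, Fin.sum_univ_two]

theorem enorm_polarVec {r : ℝ} (hr : 0 ≤ r) (θ : ℝ) : _root_.enorm (polarVec r θ) = r := by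
  have h : polarVec r θ ⬝ᵥ polarVec r θ = r ^ 2 := by
    rw [polarVec_dotProduct]
    simp only [polarVec, cons_val_zero, cons_val_one]
    linear_combination r ^ 2 * sin_sq_add_cos_sq θ
  rw [_root_.enorm, h, sqrt_sq hr]

theorem polarVec_add_pi_div_two_dotProduct_self (r θ : ℝ) :
    polarVec r (θ + π / 2) ⬝ᵥ polarVec r θ = 0 := by
  rw [polarVec_dotProduct, cos_add_pi_div_two, sin_add_pi_div_two]
  simp only [polarVec, cons_val_zero, cons_val_one]
  ring

theorem polarVec_add_int_mul_two_pi (r θ : ℝ) (n : ℤ) :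
    polarVec r (θ + n * (2 * π)) = polarVec r θ := by
  simp only [polarVec, cos_add_int_mul_two_pi, sin_add_int_mul_two_pi]

theorem exists_polarVec_eq {r : ℝ} {η : Fin 2 → ℝ} (hη : _root_.enorm η = r) :
    ∃ θ, polarVec r θ = η := by
  set c : ℂ := ⟨η 0, η 1⟩
  have hc : ‖c‖ = r := by
    rw [← hη, Complex.norm_def, Complex.normSq_mk, _root_.enorm]
    simp [dotProduct, Fin.sum_univ_two]
  refine ⟨Complex.arg c, funext fun i ↦ ?_⟩
  fin_cases i
  · simpa [polarVec, hc] using Complex.norm_mul_cos_arg c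
  · simpa [polarVec, hc] using Complex.norm_mul_sin_arg c

theorem exists_polarVec_eq_of_abs_sub_le {r : ℝ} {η : Fin 2 → ℝ} (hη : _root_.enorm η = r)
    (θ₀ : ℝ) : ∃ θ, polarVec r θ = η ∧ |θ - θ₀| ≤ π := by
  obtain ⟨θ, rfl⟩ := exists_polarVec_eq hη
  set n := round ((θ₀ - θ) / (2 * π))
  refine ⟨θ + n * (2 * π), polarVec_add_int_mul_two_pi r θ n, ?_⟩
  have h : θ + n * (2 * π) - θ₀ = -(2 * π) * ((θ₀ - θ) / (2 * π) - n) := by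
    field_simp; ring
  rw [h, abs_mul, abs_neg, abs_of_pos two_pi_pos]
  nlinarith [abs_sub_round ((θ₀ - θ) / (2 * π)), pi_pos]

theorem abs_polarVec_dotProduct_le (r θ : ℝ) (x : Fin 2 → ℝ) :
    |polarVec r θ ⬝ᵥ x| ≤ |r| * (|x 0| + |x 1|) := by
  rw [polarVec_dotProduct]
  calc _ ≤ |r * cos θ * x 0| + |r * sin θ * x 1| := abs_add_le _ _
    _ = |r| * (|cos θ| * |x 0| + |sin θ| * |x 1|) := by simp only [abs_mul]; ring
    _ ≤ |r| * (1 * |x 0| + 1 * |x 1|) := by gcongr <;> simp [abs_cos_le_one, abs_sin_le_one]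
    _ = _ := by ring

theorem hasDerivAt_polarVec_dotProduct (r θ : ℝ) (x : Fin 2 → ℝ) :
    HasDerivAt (fun θ ↦ polarVec r θ ⬝ᵥ x) (polarVec r (θ + π / 2) ⬝ᵥ x) θ := by
  simp only [polarVec_dotProduct, cos_add_pi_div_two, sin_add_pi_div_two]
  exact ((((hasDerivAt_cos θ).const_mul r).mul_const (x 0)).add
    (((hasDerivAt_sin θ).const_mul r).mul_const (x 1))).congr_deriv (by ring)

theorem hasDerivAt_charFun_polarVec {ν : Measure (Fin 2 → ℝ)} [IsFiniteMeasure ν]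
    (hν : ∀ i, Integrable (fun x : Fin 2 → ℝ ↦ x i) ν) (r θ : ℝ) :
    HasDerivAt (fun θ ↦ charFun ν (polarVec r θ))
      (-(2 * π * Complex.I) * ∫ x, (polarVec r (θ + π / 2) ⬝ᵥ x) •
        Complex.exp (-(2 * π * Complex.I) * (polarVec r θ ⬝ᵥ x : ℝ)) ∂ν) θ := by
  set c : ℂ := -(2 * π * Complex.I)
  have hnorm : ∀ t : ℝ, ‖Complex.exp (c * t)‖ = 1 := fun t ↦ by
    rw [Complex.norm_exp]; simp [c]
  have hbound : Integrable (fun x : Fin 2 → ℝ ↦ 2 * π * (|r| * (|x 0| + |x 1|))) ν :=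
    (((hν 0).abs.add (hν 1).abs).const_mul |r|).const_mul (2 * π)
  rw [← integral_const_mul]
  refine (hasDerivAt_integral_of_dominated_loc_of_deriv_le (s := Set.univ)
    (F := fun θ x ↦ Complex.exp (c * (polarVec r θ ⬝ᵥ x : ℝ)))
    (F' := fun θ x ↦ c * ((polarVec r (θ + π / 2) ⬝ᵥ x) •
      Complex.exp (c * (polarVec r θ ⬝ᵥ x : ℝ)))) Filter.univ_mem
    (.of_forall fun θ ↦ by fun_prop) ?_ (by fun_prop) (.of_forall fun x θ _ ↦ ?_) hbound
    (.of_forall fun x θ _ ↦ ?_)).2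
  · exact Integrable.of_bound (by fun_prop) 1 (.of_forall fun x ↦ (hnorm _).le)
  · rw [norm_mul, norm_neg_two_pi_mul_I, norm_smul, hnorm, mul_one, Real.norm_eq_abs]
    gcongr
    exact abs_polarVec_dotProduct_le r _ x
  · have h := ((hasDerivAt_polarVec_dotProduct r θ x).ofReal_comp.const_mul c).cexp
    exact h.congr_deriv (by rw [Complex.real_smul]; ring)

def IsApproxEaton (ν : Measure (Fin 2 → ℝ)) (ε : ℝ) : Prop :=
  ∀ ξ : Fin 2 → ℝ, ξ ≠ 0 → ∀ w : Fin 2 → ℝ, w ⬝ᵥ ξ = 0 →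
    ∀ᵐ x ∂ν, |(ν[(fun x ↦ w ⬝ᵥ x) | MeasurableSpace.comap (fun x ↦ ξ ⬝ᵥ x) (borel ℝ)]) x| ≤
      ε * _root_.enorm w

theorem norm_charFun_polarVec_sub_le {ν : Measure (Fin 2 → ℝ)} [IsProbabilityMeasure ν]
    (hν : ∀ i, Integrable (fun x : Fin 2 → ℝ ↦ x i) ν) {ε : ℝ} (hEaton : IsApproxEaton ν ε)
    {r : ℝ} (hr : 0 < r) (a b : ℝ) :
    ‖charFun ν (polarVec r b) - charFun ν (polarVec r a)‖ ≤ 2 * π * (ε * r) * |b - a| := by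
  have hderiv_le : ∀ θ, ‖-(2 * π * Complex.I) * ∫ x, (polarVec r (θ + π / 2) ⬝ᵥ x) •
      Complex.exp (-(2 * π * Complex.I) * (polarVec r θ ⬝ᵥ x : ℝ)) ∂ν‖ ≤ 2 * π * (ε * r) := by
    intro θ
    have hξ : polarVec r θ ≠ 0 := fun h ↦ hr.ne <| by
      simpa [h, _root_.enorm] using enorm_polarVec hr.le θ
    have hcond := hEaton _ hξ _ (polarVec_add_pi_div_two_dotProduct_self r θ)
    rw [enorm_polarVec hr.le] at hcond
    rw [norm_mul, norm_neg_two_pi_mul_I]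
    exact mul_le_mul_of_nonneg_left (norm_integral_smul_cexp_le_of_abs_condExp_le
      (by fun_prop) (integrable_dotProduct hν _) hcond) two_pi_pos.le
  simpa [Real.norm_eq_abs] using convex_univ.norm_image_sub_le_of_norm_hasDerivWithin_le
    (fun θ _ ↦ (hasDerivAt_charFun_polarVec hν r θ).hasDerivWithinAt)
    (fun θ _ ↦ hderiv_le θ) (Set.mem_univ a) (Set.mem_univ b)

/-- There is an absolute constant `C' ≥ 1` such that: if `z ∼ ν` is an
integrable random vector in `ℝ²` with a Lebesgue density such that for every nonzero `ξ`
and every `w ⊥ ξ`, `|E[wᵀz | ξᵀz]| ≤ ε‖w‖` a.s., then for any `ξ, ξ'` with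
`‖ξ‖ = ‖ξ'‖ = r > 0`, `|f̂(ξ') − f̂(ξ)| ≤ 2π C' r ε`. -/
theorem charFun_angular_oscillation :
    ∃ C' : ℝ, 1 ≤ C' ∧
      ∀ (ν : Measure (Fin 2 → ℝ)), IsProbabilityMeasure ν →
      ∀ (f : (Fin 2 → ℝ) → ENNReal), Measurable f → ν = volume.withDensity f →
      (∀ i, Integrable (fun x : Fin 2 → ℝ => x i) ν) →
      ∀ ε : ℝ, 0 ≤ ε →
      (∀ ξ : Fin 2 → ℝ, ξ ≠ 0 → ∀ w : Fin 2 → ℝ, w ⬝ᵥ ξ = 0 →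
        ∀ᵐ x ∂ν,
          |(ν[(fun x => w ⬝ᵥ x) |
              MeasurableSpace.comap (fun x : Fin 2 → ℝ => ξ ⬝ᵥ x) (borel ℝ)]) x| ≤
            ε * _root_.enorm w) →
      ∀ (r : ℝ), 0 < r → ∀ ξ ξ' : Fin 2 → ℝ, _root_.enorm ξ = r → _root_.enorm ξ' = r →
        ‖charFun ν ξ' - charFun ν ξ‖ ≤ 2 * π * C' * r * ε := by
  refine ⟨π, by linarith [pi_gt_three], ?_⟩
  intro ν _ _ _ _ hν ε hε hEaton r hr ξ ξ' hξ hξ'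
  obtain ⟨θ, rfl⟩ := exists_polarVec_eq hξ
  obtain ⟨θ', rfl, hθθ'⟩ := exists_polarVec_eq_of_abs_sub_le hξ' θ
  calc _ ≤ 2 * π * (ε * r) * |θ' - θ| := norm_charFun_polarVec_sub_le hν hEaton hr θ θ'
    _ ≤ 2 * π * (ε * r) * π := by gcongr
    _ = 2 * π * π * r * ε := by ring
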